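/- arXiv:1007.5134 — 3 statements merged into one kernel-verified Lean document; each statement's English description precedes it below -/
import Mathlib

section
/- If f is an entire function of exponential type at most πb whose restriction to the real line lies in L^p(ℝ) for some 1 ≤ p ≤ ∞, then for every real c the shifted function t ↦ f(t+ic) satisfies ‖f(·+ic)‖_{L^p(ℝ)} ≤ e^{πb|c|}‖f‖_{L^p(ℝ)} (Plancherel–Polya inequality). -/
/-!
Multiplying by `exp (i σ z)` and applying Phragmén–Lindelöf in a half-plane shows that an entire
function of exponential type `τ` bounded by `M` on `ℝ` satisfies `‖f z‖ ≤ M exp (τ |Im z|)`; this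
is the case `p = ∞`. For `p < ∞` and a compact `K ⊆ ℝ`, apply the same bound to the entire function
`h z = ∫_K ψ t f (t + z) dt`, which again has type `τ` and, by Hölder and translation invariance,
is bounded on `ℝ` by `‖ψ‖_q ‖f‖_p`. Evaluating at `z = i c` with `ψ = |g|^(p-2) ḡ`,
`g = f (· + i c)`, gives `‖g‖_{L^p(K)}^p ≤ exp (τ |c|) ‖f‖_p ‖g‖_{L^p(K)}^(p-1)`, and `K ↑ ℝ`.
-/

open MeasureTheory Complex Real Set Filter Topology
open scoped ENNReal ComplexConjugate

def ExpTypeLE {E : Type*} [NormedAddCommGroup E] (f : ℂ → E) (τ : ℝ) : Prop :=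
  ∀ ε > 0, ∃ C : ℝ, ∀ z : ℂ, ‖f z‖ ≤ C * Real.exp ((τ + ε) * ‖z‖)

section PhragmenLindelof

variable {E : Type*} [NormedAddCommGroup E] {f : ℂ → E} {τ σ C M : ℝ}

theorem ExpTypeLE.comp_neg (hf : ExpTypeLE f τ) : ExpTypeLE (fun z => f (-z)) τ :=
  fun ε hε => (hf ε hε).imp fun _ hC z => by simpa using hC (-z)

variable [NormedSpace ℂ E]

theorem norm_le_mul_exp_im_of_norm_le_mul_exp (hf : Differentiable ℂ f) (hσ : 0 ≤ σ)
    (hC : ∀ z, ‖f z‖ ≤ C * Real.exp (σ * ‖z‖)) (hM : ∀ x : ℝ, ‖f x‖ ≤ M) {z : ℂ}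
    (hz : 0 ≤ z.im) : ‖f z‖ ≤ M * Real.exp (σ * z.im) := by
  -- `g` is bounded by `M` on the imaginary axis and by `C` on `[0, ∞)`.
  set g : ℂ → E := fun w => Complex.exp (-σ * w) • f (w * I)
  have hg : ∀ w, ‖g w‖ = Real.exp (-σ * w.re) * ‖f (w * I)‖ := fun w => by
    rw [norm_smul, Complex.norm_exp, ← ofReal_neg, re_ofReal_mul]
  have hgM : ∀ w : ℂ, 0 ≤ w.re → ‖g w‖ ≤ M := by
    intro w hw
    refine PhragmenLindelof.right_half_plane_of_bounded_on_real
      (Differentiable.diffContOnCl (by fun_prop)) ⟨1, one_lt_two, σ, ?_⟩ ⟨C, ?_⟩ (fun x => ?_) hw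
    · refine .of_bound C (eventually_inf_principal.2 (.of_forall fun w (hw : 0 < w.re) => ?_))
      rw [hg, Real.rpow_one, Real.norm_of_nonneg (Real.exp_pos _).le]
      refine (mul_le_of_le_one_left (norm_nonneg _) (Real.exp_le_one_iff.2 ?_)).trans ?_
      · nlinarith
      · simpa using hC (w * I)
    · refine eventually_map.2 ((eventually_ge_atTop 0).mono fun x (hx : 0 ≤ x) => ?_)
      rw [hg, ofReal_re]
      calc Real.exp (-σ * x) * ‖f (x * I)‖ ≤ Real.exp (-σ * x) * (C * Real.exp (σ * x)) := by
            gcongr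
            simpa [abs_of_nonneg hx] using hC (x * I)
        _ = C := by rw [mul_left_comm, ← Real.exp_add]; simp
    · rw [hg, mul_re, ofReal_re, ofReal_im, I_re, I_im, mul_assoc, I_mul_I]
      simpa using hM (-x)
  have hw : (-(z * I)) * I = z := by rw [neg_mul, mul_assoc, I_mul_I, mul_neg_one, neg_neg]
  have := hgM (-(z * I)) (by simpa using hz)
  rw [hg, hw, neg_re, mul_I_re, neg_neg] at this
  calc ‖f z‖ = Real.exp (σ * z.im) * (Real.exp (-σ * z.im) * ‖f z‖) := by
        rw [← mul_assoc, ← Real.exp_add]; simp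
    _ ≤ M * Real.exp (σ * z.im) := by rw [mul_comm]; gcongr

theorem ExpTypeLE.norm_le_mul_exp_im (hf : Differentiable ℂ f) (htype : ExpTypeLE f τ)
    (hτ : 0 ≤ τ) (hM : ∀ x : ℝ, ‖f x‖ ≤ M) {z : ℂ} (hz : 0 ≤ z.im) :
    ‖f z‖ ≤ M * Real.exp (τ * z.im) := by
  refine ge_of_tendsto (x := 𝓝[>] (0 : ℝ)) (f := fun ε => M * Real.exp ((τ + ε) * z.im)) ?_ ?_
  · exact (Continuous.tendsto' (by fun_prop) 0 _ (by simp)).mono_left nhdsWithin_le_nhds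
  · filter_upwards [self_mem_nhdsWithin] with ε (hε : 0 < ε)
    obtain ⟨C, hC⟩ := htype ε hε
    exact norm_le_mul_exp_im_of_norm_le_mul_exp hf (by linarith) hC hM hz

theorem ExpTypeLE.norm_le_mul_exp_abs_im (hf : Differentiable ℂ f) (htype : ExpTypeLE f τ)
    (hτ : 0 ≤ τ) (hM : ∀ x : ℝ, ‖f x‖ ≤ M) (z : ℂ) :
    ‖f z‖ ≤ M * Real.exp (τ * |z.im|) := by
  rcases le_total 0 z.im with hz | hz
  · rw [abs_of_nonneg hz]
    exact htype.norm_le_mul_exp_im hf hτ hM hz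
  · rw [abs_of_nonpos hz]
    simpa using htype.comp_neg.norm_le_mul_exp_im (hf.comp differentiable_neg) hτ
      (fun x => by simpa using hM (-x)) (z := -z) (by simpa using hz)

end PhragmenLindelof

section NormingFunction

variable {α : Type*} {g : α → ℂ} {r : ℝ}

/-- Hölder's inequality `‖∫ ψ g‖ ≤ ‖ψ‖_q ‖g‖_p` is an equality at `ψ = normingFn p g`. -/
noncomputable def normingFn (r : ℝ) (g : α → ℂ) (x : α) : ℂ :=
  ((‖g x‖ ^ (r - 2) : ℝ) : ℂ) * conj (g x)

theorem norm_normingFn_le (r : ℝ) (g : α → ℂ) (x : α) : ‖normingFn r g x‖ ≤ ‖g x‖ ^ (r - 1) := by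
  rcases eq_or_ne (g x) 0 with hx | hx
  · simpa [normingFn, hx] using Real.rpow_nonneg le_rfl _
  · rw [normingFn, norm_mul, norm_real, RCLike.norm_conj, Real.norm_of_nonneg (by positivity),
      ← Real.rpow_add_one (norm_ne_zero_iff.2 hx)]
    norm_num [sub_add]

theorem normingFn_mul_self (hr : r ≠ 0) (x : α) :
    normingFn r g x * g x = ((‖g x‖ ^ r : ℝ) : ℂ) := by
  rcases eq_or_ne (g x) 0 with hx | hx
  · simp [normingFn, hx, Real.zero_rpow hr]
  · rw [normingFn, mul_assoc, conj_mul', ← ofReal_pow, ← ofReal_mul, ← Real.rpow_natCast,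
      ← Real.rpow_add (norm_pos_iff.2 hx)]
    norm_num

variable [MeasurableSpace α] {μ : Measure α}

theorem measurable_normingFn (hg : Measurable g) : Measurable (normingFn r g) := by
  unfold normingFn; fun_prop

theorem enorm_integral_normingFn_mul_self {p : ℝ≥0∞} (hp0 : p ≠ 0) (hp : p ≠ ∞)
    (hg : MemLp g p μ) :
    ‖∫ x, normingFn p.toReal g x * g x ∂μ‖ₑ = eLpNorm g p μ ^ p.toReal := by
  have hP : 0 < p.toReal := ENNReal.toReal_pos hp0 hp
  simp_rw [normingFn_mul_self hP.ne', integral_complex_ofReal]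
  rw [← ofReal_norm, norm_real, Real.norm_of_nonneg (by positivity),
    ofReal_integral_eq_lintegral_ofReal (hg.integrable_norm_rpow hp0 hp)
      (.of_forall fun _ => by positivity),
    eLpNorm_eq_eLpNorm' hp0 hp, ← lintegral_rpow_enorm_eq_rpow_eLpNorm' hP]
  simp_rw [← ENNReal.ofReal_rpow_of_nonneg (norm_nonneg _) hP.le, ofReal_norm]

theorem eLpNorm_normingFn_le {p q : ℝ≥0∞} [p.HolderConjugate q] (hp : p ≠ ∞) :
    eLpNorm (normingFn p.toReal g) q μ ≤ eLpNorm g p μ ^ (p.toReal - 1) := by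
  rcases eq_or_ne p 1 with rfl | hp1
  · have hq : q = ∞ := (ENNReal.HolderConjugate.eq_top_iff_eq_one q 1).2 rfl
    subst hq
    simpa [eLpNorm_exponent_top] using eLpNormEssSup_le_of_ae_bound (μ := μ) (C := 1)
      (.of_forall fun x => by simpa using norm_normingFn_le 1 g x)
  have hq : q ≠ ∞ := mt (ENNReal.HolderConjugate.eq_top_iff_eq_one q p).1 hp1
  have hPQ := ENNReal.HolderConjugate.toReal_of_ne_top hp hq
  calc eLpNorm (normingFn p.toReal g) q μ
      ≤ eLpNorm (fun x => ‖g x‖ ^ (p.toReal - 1)) q μ :=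
        eLpNorm_mono_real (norm_normingFn_le _ g)
    _ = eLpNorm g (q * ENNReal.ofReal (p.toReal - 1)) μ ^ (p.toReal - 1) :=
        eLpNorm_norm_rpow g (by linarith [hPQ.lt])
    _ = eLpNorm g p μ ^ (p.toReal - 1) := by
        rw [← ENNReal.ofReal_toReal hq, ← ENNReal.ofReal_mul ENNReal.toReal_nonneg, mul_comm,
          hPQ.sub_one_mul_conj, ENNReal.ofReal_toReal hp]

theorem eLpNorm_le_of_enorm_integral_normingFn_mul_le {p q : ℝ≥0∞} [p.HolderConjugate q]
    (hp : p ≠ ∞) (hg : MemLp g p μ) {A : ℝ≥0∞}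
    (h : ‖∫ x, normingFn p.toReal g x * g x ∂μ‖ₑ ≤ A * eLpNorm (normingFn p.toReal g) q μ) :
    eLpNorm g p μ ≤ A := by
  have hp0 := ENNReal.HolderConjugate.ne_zero p q
  set L := eLpNorm g p μ
  rcases eq_or_ne L 0 with hL0 | hL0
  · exact hL0 ▸ zero_le
  have hLtop : L ≠ ∞ := hg.eLpNorm_ne_top
  have hpow : L ^ (p.toReal - 1) * L ≤ L ^ (p.toReal - 1) * A := by
    calc L ^ (p.toReal - 1) * L = L ^ (p.toReal - 1 + 1) := by
          rw [ENNReal.rpow_add _ _ hL0 hLtop, ENNReal.rpow_one]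
      _ = L ^ p.toReal := by rw [sub_add_cancel]
      _ = ‖∫ x, normingFn p.toReal g x * g x ∂μ‖ₑ :=
          (enorm_integral_normingFn_mul_self hp0 hp hg).symm
      _ ≤ A * L ^ (p.toReal - 1) := h.trans (mul_le_mul_right (eLpNorm_normingFn_le hp) _)
      _ = L ^ (p.toReal - 1) * A := mul_comm _ _
  exact (ENNReal.mul_le_mul_iff_right (by simp [hL0, hLtop]) (by simp [hL0, hLtop])).1 hpow

end NormingFunction

section TranslationAverage

variable {f : ℂ → ℂ} {K : Set ℝ} {ψ : ℝ → ℂ} {B τ : ℝ}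

theorem IsCompact.integrableOn_mul_of_continuous (hK : IsCompact K)
    (hψ : AEStronglyMeasurable ψ (volume.restrict K)) (hψB : ∀ t ∈ K, ‖ψ t‖ ≤ B)
    {g : ℝ → ℂ} (hg : Continuous g) : IntegrableOn (fun t => ψ t * g t) K := by
  obtain ⟨R, hR⟩ := hK.exists_bound_of_continuousOn hg.continuousOn
  refine .of_bound hK.measure_lt_top (hψ.mul hg.aestronglyMeasurable) (B * R) ?_
  exact (ae_restrict_iff' hK.measurableSet).2
    (.of_forall fun t ht => norm_mul_le_of_le (hψB t ht) (hR t ht))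

theorem differentiable_setIntegral_mul_comp_add (hf : Differentiable ℂ f) (hK : IsCompact K)
    (hψ : AEStronglyMeasurable ψ (volume.restrict K)) (hψB : ∀ t ∈ K, ‖ψ t‖ ≤ B) :
    Differentiable ℂ fun z => ∫ t in K, ψ t * f (t + z) := by
  intro z₀
  have hfc := hf.continuous
  have hf' : Continuous (deriv f) := hf.contDiff.continuous_deriv le_rfl
  obtain ⟨D, hD⟩ := ((hK.prod (isCompact_closedBall z₀ 1)).image
    (by fun_prop : Continuous fun q : ℝ × ℂ => (q.1 : ℂ) + q.2)).exists_bound_of_continuousOn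
    hf'.continuousOn
  refine (hasDerivAt_integral_of_dominated_loc_of_deriv_le
    (F' := fun z t => ψ t * deriv f (t + z)) (bound := fun _ => B * D)
    (Metric.ball_mem_nhds z₀ one_pos)
    (.of_forall fun z =>
      hψ.mul (by fun_prop : Continuous fun t : ℝ => f (t + z)).aestronglyMeasurable)
    (hK.integrableOn_mul_of_continuous hψ hψB (by fun_prop))
    (hψ.mul (by fun_prop : Continuous fun t : ℝ => deriv f (t + z₀)).aestronglyMeasurable)
    ?_ (integrableOn_const hK.measure_lt_top.ne) ?_).2.differentiableAt
  · refine (ae_restrict_iff' hK.measurableSet).2 (.of_forall fun t ht z hz => ?_)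
    exact norm_mul_le_of_le (hψB t ht)
      (hD _ ⟨(t, z), ⟨ht, Metric.ball_subset_closedBall hz⟩, rfl⟩)
  · exact .of_forall fun t z _ => ((hf _).hasDerivAt.comp_const_add (t : ℂ) z).const_mul (ψ t)

theorem ExpTypeLE.setIntegral_mul_comp_add (htype : ExpTypeLE f τ) (hτ : 0 ≤ τ)
    (hK : IsCompact K) (hψB : ∀ t ∈ K, ‖ψ t‖ ≤ B) :
    ExpTypeLE (fun z => ∫ t in K, ψ t * f (t + z)) τ := by
  intro ε hε
  obtain ⟨C, hC⟩ := htype ε hε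
  have hC0 : 0 ≤ C := by simpa using (norm_nonneg _).trans (hC 0)
  obtain ⟨r, hr⟩ := hK.isBounded.exists_norm_le
  refine ⟨B * (C * Real.exp ((τ + ε) * r)) * (volume K).toReal, fun z => ?_⟩
  have hbound : ∀ t ∈ K, ‖ψ t * f (t + z)‖ ≤
      B * (C * Real.exp ((τ + ε) * r)) * Real.exp ((τ + ε) * ‖z‖) := by
    intro t ht
    have hB : 0 ≤ B := (norm_nonneg _).trans (hψB t ht)
    have hnorm : ‖(t : ℂ) + z‖ ≤ r + ‖z‖ := (norm_add_le _ _).trans (by simpa using hr t ht)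
    calc ‖ψ t * f (t + z)‖ ≤ B * (C * Real.exp ((τ + ε) * (r + ‖z‖))) := by
          rw [norm_mul]
          gcongr
          · exact hψB t ht
          · exact (hC _).trans (by gcongr)
      _ = _ := by rw [mul_add, Real.exp_add]; ring
  calc ‖∫ t in K, ψ t * f (t + z)‖
      ≤ B * (C * Real.exp ((τ + ε) * r)) * Real.exp ((τ + ε) * ‖z‖) * (volume K).toReal :=
        norm_setIntegral_le_of_norm_le_const hK.measure_lt_top hbound
    _ = _ := by ring

theorem eLpNorm_comp_add_ofReal (hf : Continuous f) (p : ℝ≥0∞) (x : ℝ) :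
    eLpNorm (fun t : ℝ => f (t + x)) p volume = eLpNorm (fun t : ℝ => f t) p volume := by
  simpa [Function.comp_def] using eLpNorm_comp_measurePreserving (p := p)
    (hf.comp continuous_ofReal).aestronglyMeasurable (measurePreserving_add_right volume x)

theorem enorm_setIntegral_mul_comp_add_ofReal_le {p q : ℝ≥0∞} [p.HolderConjugate q]
    (hf : Continuous f) (hψ : AEStronglyMeasurable ψ (volume.restrict K)) (x : ℝ) :
    ‖∫ t in K, ψ t * f (t + x)‖ₑ ≤
      eLpNorm ψ q (volume.restrict K) * eLpNorm (fun t : ℝ => f t) p volume := by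
  have hfx : Continuous fun t : ℝ => f (t + x) := by fun_prop
  calc ‖∫ t in K, ψ t * f (t + x)‖ₑ ≤ eLpNorm (ψ • fun t : ℝ => f (t + x)) 1 (volume.restrict K) :=
        (enorm_integral_le_lintegral_enorm _).trans_eq eLpNorm_one_eq_lintegral_enorm.symm
    _ ≤ eLpNorm ψ q (volume.restrict K) * eLpNorm (fun t : ℝ => f (t + x)) p (volume.restrict K) :=
        eLpNorm_smul_le_mul_eLpNorm hfx.aestronglyMeasurable hψ
    _ ≤ eLpNorm ψ q (volume.restrict K) * eLpNorm (fun t : ℝ => f t) p volume := by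
        rw [← eLpNorm_comp_add_ofReal hf p x]
        exact mul_le_mul_right (eLpNorm_mono_measure _ Measure.restrict_le_self) _

theorem ExpTypeLE.enorm_setIntegral_mul_comp_add_I_mul_le {p q : ℝ≥0∞} [p.HolderConjugate q]
    (hf : Differentiable ℂ f) (htype : ExpTypeLE f τ) (hτ : 0 ≤ τ) (hK : IsCompact K)
    (hψ : AEStronglyMeasurable ψ (volume.restrict K)) (hψB : ∀ t ∈ K, ‖ψ t‖ ≤ B) (c : ℝ) :
    ‖∫ t in K, ψ t * f (t + I * c)‖ₑ ≤ ENNReal.ofReal (Real.exp (τ * |c|)) *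
      eLpNorm (fun t : ℝ => f t) p volume * eLpNorm ψ q (volume.restrict K) := by
  rw [mul_assoc, mul_comm (eLpNorm _ p _)]
  set N := eLpNorm ψ q (volume.restrict K) * eLpNorm (fun t : ℝ => f t) p volume
  rcases eq_or_ne N ⊤ with hN | hN
  · rw [hN, ENNReal.mul_top (by simp [Real.exp_pos])]
    exact le_top
  have hreal (x : ℝ) : ‖∫ t in K, ψ t * f (t + x)‖ ≤ N.toReal := by
    rw [← toReal_enorm]
    exact ENNReal.toReal_mono hN (enorm_setIntegral_mul_comp_add_ofReal_le hf.continuous hψ x)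
  have hbound := (htype.setIntegral_mul_comp_add hτ hK hψB).norm_le_mul_exp_abs_im
    (differentiable_setIntegral_mul_comp_add hf hK hψ hψB) hτ hreal (I * c)
  calc ‖∫ t in K, ψ t * f (t + I * c)‖ₑ = ENNReal.ofReal ‖∫ t in K, ψ t * f (t + I * c)‖ :=
        (ofReal_norm _).symm
    _ ≤ ENNReal.ofReal (N.toReal * Real.exp (τ * |c|)) :=
        ENNReal.ofReal_le_ofReal (by simpa using hbound)
    _ = ENNReal.ofReal (Real.exp (τ * |c|)) * N := by
        rw [ENNReal.ofReal_mul ENNReal.toReal_nonneg, ENNReal.ofReal_toReal hN, mul_comm]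

end TranslationAverage

theorem eLpNorm_le_of_forall_eLpNorm_restrict_le {α E : Type*} [MeasurableSpace α]
    [NormedAddCommGroup E] {μ : Measure α} {g : α → E} {p A : ℝ≥0∞}
    (hg : AEStronglyMeasurable g μ) {s : ℕ → Set α} (hs : ∀ n, MeasurableSet (s n))
    (hcover : ∀ x, ∀ᶠ n in atTop, x ∈ s n) (h : ∀ n, eLpNorm g p (μ.restrict (s n)) ≤ A) :
    eLpNorm g p μ ≤ A := by
  refine (Lp.eLpNorm_lim_le_liminf_eLpNorm (fun n => hg.indicator (hs n)) g
    (.of_forall fun x => tendsto_const_nhds.congr'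
      ((hcover x).mono fun n hn => (indicator_of_mem hn g).symm))).trans ?_
  simp_rw [eLpNorm_indicator_eq_eLpNorm_restrict (hs _)]
  exact liminf_le_of_frequently_le' (.of_forall h)

theorem Continuous.norm_le_of_ae_norm_le {X E : Type*} [TopologicalSpace X] [MeasurableSpace X]
    [NormedAddCommGroup E] {μ : Measure X} [μ.IsOpenPosMeasure] {u : X → E} {M : ℝ}
    (hu : Continuous u) (h : ∀ᵐ x ∂μ, ‖u x‖ ≤ M) (x : X) : ‖u x‖ ≤ M := by
  have hdense := (Measure.dense_of_ae h).closure_eq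
  rw [(isClosed_le hu.norm continuous_const).closure_eq] at hdense
  exact eq_univ_iff_forall.1 hdense x

section ShiftedLine

variable {f : ℂ → ℂ} {τ : ℝ}

theorem ExpTypeLE.eLpNorm_top_comp_add_I_mul_le (hf : Differentiable ℂ f)
    (htype : ExpTypeLE f τ) (hτ : 0 ≤ τ) (c : ℝ) :
    eLpNorm (fun t : ℝ => f (t + I * c)) ∞ volume ≤
      ENNReal.ofReal (Real.exp (τ * |c|)) * eLpNorm (fun t : ℝ => f t) ∞ volume := by
  rcases eq_or_ne (eLpNorm (fun t : ℝ => f t) ∞ volume) ∞ with htop | htop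
  · rw [htop, ENNReal.mul_top (by simp [Real.exp_pos])]
    exact le_top
  set M := (eLpNorm (fun t : ℝ => f t) ∞ volume).toReal
  have hM : ∀ x : ℝ, ‖f x‖ ≤ M := by
    refine (hf.continuous.comp continuous_ofReal).norm_le_of_ae_norm_le (μ := volume) ?_
    filter_upwards [ae_le_eLpNormEssSup (f := fun t : ℝ => f t) (μ := volume)] with x hx
    rw [← toReal_enorm]
    exact ENNReal.toReal_mono htop (by rwa [eLpNorm_exponent_top])
  have hshift (t : ℝ) : ‖f (t + I * c)‖ ≤ M * Real.exp (τ * |c|) := by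
    simpa using htype.norm_le_mul_exp_abs_im hf hτ hM (t + I * c)
  rw [eLpNorm_exponent_top]
  refine (eLpNormEssSup_le_of_ae_bound (.of_forall hshift)).trans_eq ?_
  rw [ENNReal.ofReal_mul ENNReal.toReal_nonneg, ENNReal.ofReal_toReal htop, mul_comm]

theorem ExpTypeLE.eLpNorm_restrict_comp_add_I_mul_le {p : ℝ≥0∞} (hp1 : 1 ≤ p) (hp : p ≠ ∞)
    (hf : Differentiable ℂ f) (htype : ExpTypeLE f τ) (hτ : 0 ≤ τ) {K : Set ℝ}
    (hK : IsCompact K) (c : ℝ) :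
    eLpNorm (fun t : ℝ => f (t + I * c)) p (volume.restrict K) ≤
      ENNReal.ofReal (Real.exp (τ * |c|)) * eLpNorm (fun t : ℝ => f t) p volume := by
  have := ENNReal.HolderConjugate.conjExponent hp1
  have := isFiniteMeasure_restrict.2 (hK.measure_lt_top (μ := volume)).ne
  have hg : Continuous fun t : ℝ => f (t + I * c) := by have := hf.continuous; fun_prop
  have hP : 1 ≤ p.toReal := by simpa using ENNReal.toReal_mono hp hp1
  obtain ⟨R, hR⟩ := hK.exists_bound_of_continuousOn hg.continuousOn
  refine eLpNorm_le_of_enorm_integral_normingFn_mul_le (q := ENNReal.conjExponent p) hp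
    (.of_bound hg.aestronglyMeasurable R ((ae_restrict_iff' hK.measurableSet).2 (.of_forall hR)))
    (htype.enorm_setIntegral_mul_comp_add_I_mul_le hf hτ hK
      (measurable_normingFn hg.measurable).aestronglyMeasurable (B := R ^ (p.toReal - 1))
      (fun t ht => ?_) c)
  exact (norm_normingFn_le _ _ t).trans
    (Real.rpow_le_rpow (norm_nonneg _) (hR t ht) (by linarith))

end ShiftedLine

theorem plancherel_polya_general (f : ℂ → ℂ) (b : ℝ) (hb : 0 < b)
    (hf : Differentiable ℂ f)
    (htype : ∀ ε > 0, ∃ C : ℝ, ∀ z : ℂ, ‖f z‖ ≤ C * Real.exp ((π * b + ε) * ‖z‖))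
    (p : ENNReal) (hp : 1 ≤ p)
    (c : ℝ) :
    eLpNorm (fun t : ℝ => f (t + Complex.I * c)) p volume ≤
      ENNReal.ofReal (Real.exp (π * b * |c|)) * eLpNorm (fun t : ℝ => f t) p volume := by
  have htype : ExpTypeLE f (π * b) := htype
  have hτ : 0 ≤ π * b := by positivity
  rcases eq_or_ne p ∞ with rfl | hp_top
  · exact htype.eLpNorm_top_comp_add_I_mul_le hf hτ c
  refine eLpNorm_le_of_forall_eLpNorm_restrict_le (s := fun n : ℕ => Icc (-(n : ℝ)) n)
    (by have := hf.continuous; fun_prop) (fun _ => measurableSet_Icc) (fun x => ?_)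
    (fun _ => htype.eLpNorm_restrict_comp_add_I_mul_le hp hp_top hf hτ isCompact_Icc c)
  filter_upwards [eventually_ge_atTop ⌈|x|⌉₊] with n hn
  exact abs_le.1 ((Nat.le_ceil _).trans (by exact_mod_cast hn))

/-- **Plancherel–Polya inequality.** If `f` is entire of exponential type at most `π b`
and its restriction to the real line is in `L^p`, then the shift `t ↦ f (t + I*c)`
satisfies `‖f (· + I*c)‖_p ≤ exp (π b |c|) ‖f‖_p`. -/
theorem plancherel_polya (f : ℂ → ℂ) (b : ℝ) (hb : 0 < b)
    (hf : Differentiable ℂ f)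
    (htype : ∀ ε > 0, ∃ C : ℝ, ∀ z : ℂ, ‖f z‖ ≤ C * Real.exp ((π * b + ε) * ‖z‖))
    (p : ENNReal) (hp : 1 ≤ p)
    (hLp : MeasureTheory.MemLp (fun t : ℝ => f t) p volume)
    (c : ℝ) :
    eLpNorm (fun t : ℝ => f (t + Complex.I * c)) p volume ≤
      ENNReal.ofReal (Real.exp (π * b * |c|)) * eLpNorm (fun t : ℝ => f t) p volume :=
  plancherel_polya_general f b hb hf htype p hp c
end

section
/- Let P(w,t) = (1/π) · v/((u−t)² + v²) be the Poisson kernel for w = u+iv, v > 0. For any measurable h : ℝ → ℂ with ∫ |h(s)|/(s²+1) ds < ∞ and any r > 0, (1/(2r)) ∫_{−r}^{r} (P(t+i,·) ⋆ h)(t) dt satisfies: (1/(2r)) ∫_{−r}^{r} ∫_{−∞}^{∞} |h(s)| P(t+i,s) ds dt ≤ (1/(2r)) ∫_{−2r}^{2r} |h(s)| ds + 2 ∫_{|s|>2r} |h(s)|/(s²+1) ds. -/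
open MeasureTheory Real ProbabilityTheory Set

/-! The Poisson kernel at height one is the Cauchy density: `P(t + i, s) = cauchyPDFReal s 1 t`.
By Fubini the left side is `∫ |h s| I(s) ds` with `I(s) = ∫_{-r}^{r} P(t + i, s) dt`. Since the
Cauchy density has mass one, `I(s) ≤ 1`; for `|s| > 2r` and `|t| ≤ r` we have
`|t - s| ≥ |s| / 2`, so `I(s) ≤ 2r · 4 / (π (s² + 1))`, and `4 / π ≤ 2`. -/

lemma cauchyPDFReal_one_eq (x₀ x : ℝ) :
    cauchyPDFReal x₀ 1 x = 1 / π * (1 / ((x - x₀) ^ 2 + 1)) := by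
  simp [cauchyPDFReal_def]

/-- Peetre's inequality. -/
lemma sq_add_one_le_two_mul_mul (t s : ℝ) :
    s ^ 2 + 1 ≤ 2 * (t ^ 2 + 1) * ((t - s) ^ 2 + 1) := by
  nlinarith [sq_nonneg (t + (t - s)), mul_nonneg (sq_nonneg t) (sq_nonneg (t - s))]

lemma sq_add_one_le_four_mul {t s : ℝ} (h : 2 * |t| ≤ |s|) :
    s ^ 2 + 1 ≤ 4 * ((t - s) ^ 2 + 1) := by
  have hts : |s| / 2 ≤ |t - s| := by
    linarith [abs_sub_abs_le_abs_sub s t, abs_sub_comm s t]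
  have := pow_le_pow_left₀ (by positivity) hts 2
  rw [div_pow, sq_abs, sq_abs] at this
  linarith

lemma cauchyPDFReal_one_le_of_sq_add_one_le {x₀ x c : ℝ}
    (h : x₀ ^ 2 + 1 ≤ c * ((x - x₀) ^ 2 + 1)) :
    cauchyPDFReal x₀ 1 x ≤ c / (π * (x₀ ^ 2 + 1)) := by
  rw [cauchyPDFReal_one_eq, div_mul_div_comm, one_mul,
    div_le_div_iff₀ (by positivity) (by positivity)]
  nlinarith [pi_pos]

lemma cauchyPDFReal_one_le_of_abs_le {r s t : ℝ} (ht : |t| ≤ r) :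
    cauchyPDFReal s 1 t ≤ 2 * (r ^ 2 + 1) / (π * (s ^ 2 + 1)) := by
  refine cauchyPDFReal_one_le_of_sq_add_one_le ((sq_add_one_le_two_mul_mul t s).trans ?_)
  have : t ^ 2 ≤ r ^ 2 := sq_le_sq' (abs_le.1 ht).1 (abs_le.1 ht).2
  gcongr

lemma cauchyPDFReal_one_le_of_two_mul_abs_le {s t : ℝ} (h : 2 * |t| ≤ |s|) :
    cauchyPDFReal s 1 t ≤ 4 / (π * (s ^ 2 + 1)) :=
  cauchyPDFReal_one_le_of_sq_add_one_le (sq_add_one_le_four_mul h)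

lemma setIntegral_cauchyPDFReal_le_one (A : Set ℝ) (x₀ : ℝ) {γ : NNReal} (hγ : γ ≠ 0) :
    ∫ x in A, cauchyPDFReal x₀ γ x ≤ 1 :=
  (setIntegral_le_integral (integrable_cauchyPDFReal x₀)
    (ae_of_all _ (cauchyPDF_pos x₀ hγ · |>.le))).trans_eq
    (integral_cauchyPDFReal_eq_one x₀ hγ)

lemma setIntegral_Ioc_cauchyPDFReal_le {r s : ℝ} (hr : 0 ≤ r) (hs : 2 * r < |s|) :
    ∫ t in Ioc (-r) r, cauchyPDFReal s 1 t ≤ 8 * r / (π * (s ^ 2 + 1)) := by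
  calc ∫ t in Ioc (-r) r, cauchyPDFReal s 1 t
      ≤ ∫ _ in Ioc (-r) r, 4 / (π * (s ^ 2 + 1)) :=
        setIntegral_mono_on (integrable_cauchyPDFReal s).integrableOn (integrable_const _)
          measurableSet_Ioc fun t ht =>
            cauchyPDFReal_one_le_of_two_mul_abs_le (by linarith [abs_le.2 ⟨ht.1.le, ht.2⟩])
    _ = 8 * r / (π * (s ^ 2 + 1)) := by
        rw [setIntegral_const, smul_eq_mul, volume_real_Ioc_of_le (by linarith)]
        ring

lemma integrable_prod_of_ae_norm_le {α β E : Type*} [MeasurableSpace α] [MeasurableSpace β]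
    [NormedAddCommGroup E] {μ : Measure α} {ν : Measure β} [IsFiniteMeasure μ] [SFinite ν]
    {F : α × β → E} {G : β → ℝ} (hF : AEStronglyMeasurable F (μ.prod ν))
    (hG : Integrable G ν) (hFG : ∀ᵐ x ∂μ, ∀ y, ‖F (x, y)‖ ≤ G y) :
    Integrable F (μ.prod ν) := by
  rw [integrable_prod_iff hF]
  refine ⟨?_, (integrable_const (∫ y, G y ∂ν)).mono' hF.norm.integral_prod_right' ?_⟩
  · filter_upwards [hFG, hF.prodMk_left] with x hx hFx using hG.mono' hFx (ae_of_all _ hx)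
  · filter_upwards [hFG] with x hx
    rw [norm_of_nonneg (integral_nonneg fun y => norm_nonneg _)]
    exact integral_mono_of_nonneg (ae_of_all _ fun y => norm_nonneg _) hG (ae_of_all _ hx)

lemma aestronglyMeasurable_of_integrable_div_sq_add_one {g : ℝ → ℝ}
    (hg : Integrable fun s => g s / (s ^ 2 + 1)) : AEStronglyMeasurable g :=
  (hg.aestronglyMeasurable.mul
    (by fun_prop : Measurable fun s : ℝ => s ^ 2 + 1).aestronglyMeasurable).congr
    (ae_of_all _ fun s => div_mul_cancel₀ _ (by positivity))

lemma integrableOn_of_integrable_div_sq_add_one {g : ℝ → ℝ}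
    (hg : Integrable fun s => g s / (s ^ 2 + 1)) {K : Set ℝ} (hK : IsCompact K) :
    IntegrableOn g K :=
  (hg.integrableOn.continuousOn_mul (by fun_prop : ContinuousOn (fun s : ℝ => s ^ 2 + 1) K)
    hK).congr_fun (fun s _ => mul_div_cancel₀ _ (by positivity)) hK.measurableSet

lemma integrable_prod_mul_cauchyPDFReal {g : ℝ → ℝ}
    (hg : Integrable fun s => g s / (s ^ 2 + 1)) (r : ℝ) :
    Integrable (Function.uncurry fun t s => g s * cauchyPDFReal s 1 t)
      ((volume.restrict (Ioc (-r) r)).prod volume) := by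
  refine integrable_prod_of_ae_norm_le ?_ (hg.norm.const_mul (2 * (r ^ 2 + 1) / π)) ?_
  · exact ((aestronglyMeasurable_of_integrable_div_sq_add_one hg).comp_snd).mul
      (by unfold cauchyPDFReal; fun_prop : Measurable fun p : ℝ × ℝ => cauchyPDFReal p.2 1 p.1
        ).aestronglyMeasurable
  · filter_upwards [ae_restrict_mem measurableSet_Ioc] with t ht s
    have hK := cauchyPDFReal_one_le_of_abs_le (s := s) (abs_le.2 ⟨ht.1.le, ht.2⟩)
    rw [Function.uncurry_apply_pair, norm_mul, norm_div,
      norm_of_nonneg (cauchyPDF_pos s one_ne_zero t).le,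
      norm_of_nonneg (by positivity : (0 : ℝ) ≤ s ^ 2 + 1)]
    calc ‖g s‖ * cauchyPDFReal s 1 t
        ≤ ‖g s‖ * (2 * (r ^ 2 + 1) / (π * (s ^ 2 + 1))) := by gcongr
      _ = _ := by field_simp

lemma integral_Ioc_integral_mul_cauchyPDFReal_swap {g : ℝ → ℝ}
    (hg : Integrable fun s => g s / (s ^ 2 + 1)) (r : ℝ) :
    ∫ t in Ioc (-r) r, ∫ s, g s * cauchyPDFReal s 1 t =
      ∫ s, g s * ∫ t in Ioc (-r) r, cauchyPDFReal s 1 t := by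
  simp_rw [← integral_const_mul]
  exact integral_integral_swap (integrable_prod_mul_cauchyPDFReal hg r)

lemma integrable_mul_setIntegral_Ioc_cauchyPDFReal {g : ℝ → ℝ}
    (hg : Integrable fun s => g s / (s ^ 2 + 1)) (r : ℝ) :
    Integrable fun s => g s * ∫ t in Ioc (-r) r, cauchyPDFReal s 1 t := by
  simp_rw [← integral_const_mul]
  exact (integrable_prod_mul_cauchyPDFReal hg r).integral_prod_right

lemma integral_mul_setIntegral_Ioc_cauchyPDFReal_le {g : ℝ → ℝ} (hg0 : ∀ s, 0 ≤ g s)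
    (hg : Integrable fun s => g s / (s ^ 2 + 1)) {r : ℝ} (hr : 0 ≤ r) :
    ∫ s, g s * ∫ t in Ioc (-r) r, cauchyPDFReal s 1 t ≤
      (∫ s in Icc (-(2 * r)) (2 * r), g s) +
        8 * r / π * ∫ s in {s : ℝ | 2 * r < |s|}, g s / (s ^ 2 + 1) := by
  set T := {s : ℝ | 2 * r < |s|}
  have hT : MeasurableSet T := measurableSet_lt measurable_const measurable_abs
  have hTc : Tᶜ = Icc (-(2 * r)) (2 * r) := by ext s; simp [T, abs_le]
  have hint := integrable_mul_setIntegral_Ioc_cauchyPDFReal hg r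
  rw [← integral_add_compl hT hint, hTc, add_comm, ← integral_const_mul]
  refine add_le_add (setIntegral_mono_on hint.integrableOn
      (integrableOn_of_integrable_div_sq_add_one hg isCompact_Icc) measurableSet_Icc fun s _ => ?_)
    (setIntegral_mono_on hint.integrableOn (hg.integrableOn.const_mul _) hT fun s hs => ?_)
  · exact mul_le_of_le_one_right (hg0 s) (setIntegral_cauchyPDFReal_le_one _ s one_ne_zero)
  · calc g s * ∫ t in Ioc (-r) r, cauchyPDFReal s 1 t
          ≤ g s * (8 * r / (π * (s ^ 2 + 1))) :=
          mul_le_mul_of_nonneg_left (setIntegral_Ioc_cauchyPDFReal_le hr hs) (hg0 s)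
      _ = 8 * r / π * (g s / (s ^ 2 + 1)) := by field_simp

theorem poisson_average_estimate_general
    (h : ℝ → ℂ)
    (hint : Integrable (fun s : ℝ => ‖h s‖ / (s ^ 2 + 1))) :
    ∀ r : ℝ, 0 < r →
      (1 / (2 * r)) * ∫ t in (-r)..r, ∫ s : ℝ, ‖h s‖ * ((1 / π) * (1 / ((t - s) ^ 2 + 1))) ≤
        (1 / (2 * r)) * (∫ s in (-(2 * r))..(2 * r), ‖h s‖) +
          2 * ∫ s in {s : ℝ | 2 * r < |s|}, ‖h s‖ / (s ^ 2 + 1) := by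
  intro r hr
  simp_rw [← cauchyPDFReal_one_eq]
  rw [intervalIntegral.integral_of_le (by linarith),
    integral_Ioc_integral_mul_cauchyPDFReal_swap hint,
    intervalIntegral.integral_of_le (by linarith), ← integral_Icc_eq_integral_Ioc]
  have hmain :=
    integral_mul_setIntegral_Ioc_cauchyPDFReal_le (fun s => norm_nonneg (h s)) hint hr.le
  set A := ∫ s in Icc (-(2 * r)) (2 * r), ‖h s‖
  set T := ∫ s in {s : ℝ | 2 * r < |s|}, ‖h s‖ / (s ^ 2 + 1)
  have hT : 0 ≤ T := integral_nonneg fun s => by positivity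
  have hπ : 4 / π ≤ 2 := by rw [div_le_iff₀ pi_pos]; linarith [pi_gt_three]
  calc 1 / (2 * r) * ∫ s, ‖h s‖ * ∫ t in Ioc (-r) r, cauchyPDFReal s 1 t
      ≤ 1 / (2 * r) * (A + 8 * r / π * T) := by gcongr
    _ = 1 / (2 * r) * A + 4 / π * T := by field_simp; ring
    _ ≤ 1 / (2 * r) * A + 2 * T := by gcongr

/-- Poisson-averaging estimate at height 1: the average over `t ∈ [-r,r]` of the
Poisson integral of `|h|` is bounded by the average of `|h|` over `[-2r,2r]` plus a
tail term. Here `P(t+i, s) = (1/π) / ((t-s)^2 + 1)`. -/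
theorem poisson_average_estimate
    (h : ℝ → ℂ) (hmeas : Measurable h)
    (hint : Integrable (fun s : ℝ => ‖h s‖ / (s ^ 2 + 1))) :
    ∀ r : ℝ, 0 < r →
      (1 / (2 * r)) * ∫ t in (-r)..r, ∫ s : ℝ, ‖h s‖ * ((1 / π) * (1 / ((t - s) ^ 2 + 1))) ≤
        (1 / (2 * r)) * (∫ s in (-(2 * r))..(2 * r), ‖h s‖) +
          2 * ∫ s in {s : ℝ | 2 * r < |s|}, ‖h s‖ / (s ^ 2 + 1) :=
  poisson_average_estimate_general h hint
end

section
/- Let X = {x_k} ⊂ ℝ be separated with λ(X) = inf |x_{k+1}−x_k| > 0, and let z, x̃ ∈ ℝ with dist(z, X) ≥ λ(X)/2 and dist(x̃, X) ≥ λ(X)/2, z ≠ x̃. Then ∑_{k} |z − x̃| / (|z − x_k| |x̃ − x_k|) ≲ 1 + max(log|z − x̃|, 0), with implied constant depending only on λ(X) and sup_k|x_{k+1}−x_k|. -/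
/-!
By the triangle inequality `|z - x̃| ≤ |z - xₖ| + |x̃ - xₖ|`, each term is at most
`min(1/|z - xₖ|, |z - x̃|/|z - xₖ|²)` plus the same expression with `x̃` in place of `z`.
Separation gives an index `m` with `|w - xₖ| ≥ (λ/4)(|k - m| + 1)` for `w ∈ {z, x̃}`, so each
of the two sums is at most a multiple of `∑ₙ min(1/n, B/n²)` with `B = 4|z - x̃|/λ`; the terms
with `n ≤ B` form a harmonic sum, at most `1 + log⁺ B`, and the tail `∑_{n > B} B/n²` is at
most `2`.
-/

open Finset Real

lemma sum_inv_le_one_add_posLog {B : ℝ} (hB : 0 ≤ B) (s : Finset ℕ) :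
    ∑ n ∈ s with n ≤ ⌊B⌋₊, (n : ℝ)⁻¹ ≤ 1 + log⁺ B := by
  have h_sub : {n ∈ s | n ≤ ⌊B⌋₊} ⊆ range (⌊B⌋₊ + 1) := fun n hn ↦ by
    simpa [Nat.lt_succ_iff] using (mem_filter.1 hn).2
  have h_harmonic : ∑ n ∈ range (⌊B⌋₊ + 1), (n : ℝ)⁻¹ = harmonic ⌊B⌋₊ := by
    simp [sum_range_succ', harmonic]
  calc ∑ n ∈ s with n ≤ ⌊B⌋₊, (n : ℝ)⁻¹
      ≤ ∑ n ∈ range (⌊B⌋₊ + 1), (n : ℝ)⁻¹ :=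
        sum_le_sum_of_subset_of_nonneg h_sub fun _ _ _ ↦ by positivity
    _ ≤ 1 + log ⌊B⌋₊ := h_harmonic ▸ harmonic_le_one_add_log _
    _ ≤ 1 + log⁺ B := by
        rw [← log_of_nat_eq_posLog]
        gcongr
        exact Nat.floor_le hB

lemma sum_div_sq_le_two {B : ℝ} (hB : 0 ≤ B) (s : Finset ℕ) :
    ∑ n ∈ s with ⌊B⌋₊ < n, B / (n : ℝ) ^ 2 ≤ 2 := by
  have h_sub : {n ∈ s | ⌊B⌋₊ < n} ⊆ Ioo ⌊B⌋₊ (s.sup id + 1) := fun n hn ↦ by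
    simpa [Nat.lt_succ_iff] using ⟨(mem_filter.1 hn).2, le_sup (f := id) (mem_filter.1 hn).1⟩
  calc ∑ n ∈ s with ⌊B⌋₊ < n, B / (n : ℝ) ^ 2
      = B * ∑ n ∈ s with ⌊B⌋₊ < n, ((n : ℝ) ^ 2)⁻¹ := by simp_rw [mul_sum, div_eq_mul_inv]
    _ ≤ B * (2 / (⌊B⌋₊ + 1)) := by
        gcongr
        exact (sum_le_sum_of_subset_of_nonneg h_sub fun _ _ _ ↦ by positivity).trans
          (sum_Ioo_inv_sq_le _ _)
    _ ≤ 2 := by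
        rw [mul_div_left_comm]
        have : B / (⌊B⌋₊ + 1) ≤ 1 := (div_le_one (by positivity)).2 (Nat.lt_floor_add_one B).le
        linarith

lemma sum_min_inv_div_sq_le {B : ℝ} (hB : 0 ≤ B) (s : Finset ℕ) :
    ∑ n ∈ s, min (n : ℝ)⁻¹ (B / (n : ℝ) ^ 2) ≤ 3 + log⁺ B := by
  rw [← sum_filter_add_sum_filter_not s (· ≤ ⌊B⌋₊)]
  simp only [not_le]
  calc _ ≤ (1 + log⁺ B) + 2 :=
        add_le_add ((sum_le_sum fun _ _ ↦ min_le_left _ _).trans (sum_inv_le_one_add_posLog hB s))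
          ((sum_le_sum fun _ _ ↦ min_le_right _ _).trans (sum_div_sq_le_two hB s))
    _ = 3 + log⁺ B := by ring

lemma sum_comp_natAbs_sub_le {g : ℕ → ℝ} {A : ℝ} (hg : ∀ t : Finset ℕ, ∑ n ∈ t, g n ≤ A)
    (m : ℤ) (s : Finset ℤ) : ∑ k ∈ s, g (k - m).natAbs ≤ 2 * A := by
  have h_half (p : ℤ → Prop) [DecidablePred p]
      (hp : ∀ k j, p k → p j → (k - m).natAbs = (j - m).natAbs → k = j) :
      ∑ k ∈ s with p k, g (k - m).natAbs ≤ A := by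
    rw [← sum_image fun k hk j hj ↦ hp k j (mem_filter.1 hk).2 (mem_filter.1 hj).2]
    exact hg _
  rw [← sum_filter_add_sum_filter_not s (m ≤ ·), two_mul]
  exact add_le_add (h_half _ fun _ _ _ _ _ ↦ by omega) (h_half _ fun _ _ _ _ _ ↦ by omega)

lemma min_inv_div_sq_le_of_mul_le {c t u R : ℝ} (hc : 0 < c) (ht : 0 < t) (hR : 0 ≤ R)
    (h : c * t ≤ u) : min u⁻¹ (R / u ^ 2) ≤ c⁻¹ * min t⁻¹ (R / c / t ^ 2) := by
  have hct : 0 < c * t := mul_pos hc ht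
  calc min u⁻¹ (R / u ^ 2) ≤ min (c * t)⁻¹ (R / (c * t) ^ 2) := by gcongr
    _ = c⁻¹ * min t⁻¹ (R / c / t ^ 2) := by
        rw [mul_min_of_nonneg _ _ (by positivity)]
        congr 1 <;> field_simp

lemma sum_min_inv_div_sq_le_of_linear_growth {c R : ℝ} (hc : 0 < c) (hR : 0 ≤ R) {u : ℤ → ℝ}
    {m : ℤ} (hu : ∀ k : ℤ, c * (|(k : ℝ) - m| + 1) ≤ u k) (s : Finset ℤ) :
    ∑ k ∈ s, min (u k)⁻¹ (R / u k ^ 2) ≤ 2 / c * (3 + log⁺ (R / c)) := by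
  set g : ℕ → ℝ := fun n ↦ min (n : ℝ)⁻¹ (R / c / (n : ℝ) ^ 2)
  have hg (t : Finset ℕ) : ∑ n ∈ t, g (n + 1) ≤ 3 + log⁺ (R / c) := by
    simpa [g] using sum_min_inv_div_sq_le (B := R / c) (by positivity) (t.map (addRightEmbedding 1))
  have h_term (k : ℤ) : min (u k)⁻¹ (R / u k ^ 2) ≤ c⁻¹ * g ((k - m).natAbs + 1) := by
    refine min_inv_div_sq_le_of_mul_le hc (by positivity) hR ?_
    simpa [Nat.cast_natAbs] using hu k
  calc ∑ k ∈ s, min (u k)⁻¹ (R / u k ^ 2) ≤ c⁻¹ * ∑ k ∈ s, g ((k - m).natAbs + 1) := by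
        rw [mul_sum]
        exact sum_le_sum fun k _ ↦ h_term k
    _ ≤ c⁻¹ * (2 * (3 + log⁺ (R / c))) := by
        gcongr
        exact sum_comp_natAbs_sub_le hg m s
    _ = 2 / c * (3 + log⁺ (R / c)) := by ring

lemma div_mul_le_min_add_min {u v R : ℝ} (hu : 0 < u) (hv : 0 < v) (hR : 0 ≤ R)
    (h : R ≤ u + v) : R / (u * v) ≤ min u⁻¹ (R / u ^ 2) + min v⁻¹ (R / v ^ 2) := by
  wlog huv : u ≤ v generalizing u v
  · rw [mul_comm, add_comm]
    exact this hv hu (by linarith) (le_of_not_ge huv)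
  rcases le_total R v with hRv | hvR
  · have h_inv : R / (u * v) ≤ u⁻¹ := by
      rw [div_le_iff₀ (by positivity), inv_mul_cancel_left₀ hu.ne']
      exact hRv
    have h_sq : R / (u * v) ≤ R / u ^ 2 := by
      gcongr
      nlinarith
    have : 0 ≤ min v⁻¹ (R / v ^ 2) := by positivity
    linarith [le_min h_inv h_sq]
  · have h_recip {w : ℝ} (hw : 0 < w) (hwR : w ≤ R) : min w⁻¹ (R / w ^ 2) = w⁻¹ := by
      rw [min_eq_left_iff, le_div_iff₀ (by positivity), sq, ← mul_assoc, inv_mul_cancel₀ hw.ne']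
      linarith
    rw [h_recip hu (huv.trans hvR), h_recip hv hvR, div_le_iff₀ (by positivity)]
    field_simp
    linarith

lemma three_add_posLog_div_le (R c : ℝ) : 3 + log⁺ (R / c) ≤ (3 + log⁺ c⁻¹) * (1 + log⁺ R) := by
  have := posLog_mul (x := R) (y := c⁻¹)
  rw [← div_eq_mul_inv] at this
  nlinarith [posLog_nonneg (x := R), posLog_nonneg (x := c⁻¹)]

section SeparatedSequence

variable {lam : ℝ} {x : ℤ → ℝ}

lemma mul_sub_le_sub_of_gap (hgap : ∀ k, lam ≤ x (k + 1) - x k) {j k : ℤ} (hjk : j ≤ k) :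
    lam * (k - j) ≤ x k - x j := by
  have : Monotone fun k : ℤ ↦ x k - lam * k := monotone_int_of_le_succ fun k ↦ by
    push_cast
    linarith [hgap k]
  linarith [this hjk]

lemma exists_le_and_lt_succ (hlam : 0 < lam) (hgap : ∀ k, lam ≤ x (k + 1) - x k) (z : ℝ) :
    ∃ m : ℤ, x m ≤ z ∧ z < x (m + 1) := by
  have h_bdd : ∃ b : ℤ, ∀ k, x k ≤ z → k ≤ b := by
    refine ⟨⌈(z - x 0) / lam⌉₊, fun k hk ↦ ?_⟩
    by_contra! h
    have h_cast : (⌈(z - x 0) / lam⌉₊ : ℝ) < k := by exact_mod_cast h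
    have h_grow := mul_sub_le_sub_of_gap hgap (by omega : (0 : ℤ) ≤ k)
    have h_ceil := (div_lt_iff₀ hlam).1 ((Nat.le_ceil _).trans_lt h_cast)
    push_cast at h_grow
    linarith
  have h_inh : ∃ k : ℤ, x k ≤ z := by
    refine ⟨-⌈(x 0 - z) / lam⌉₊, ?_⟩
    have h_grow := mul_sub_le_sub_of_gap hgap (by omega : -(⌈(x 0 - z) / lam⌉₊ : ℤ) ≤ 0)
    have h_ceil := (div_le_iff₀ hlam).1 (Nat.le_ceil ((x 0 - z) / lam))
    push_cast at h_grow
    linarith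
  obtain ⟨m, hm, hmax⟩ := Int.exists_greatest_of_bdd h_bdd h_inh
  exact ⟨m, hm, lt_of_not_ge fun h ↦ by linarith [hmax _ h]⟩

lemma exists_linear_growth_abs_sub (hlam : 0 < lam) (hgap : ∀ k, lam ≤ x (k + 1) - x k) {z : ℝ}
    (hz : ∀ k, lam / 2 ≤ |z - x k|) :
    ∃ m : ℤ, ∀ k : ℤ, lam / 4 * (|(k : ℝ) - m| + 1) ≤ |z - x k| := by
  obtain ⟨m, hm, hm_succ⟩ := exists_le_and_lt_succ hlam hgap z
  refine ⟨m, fun k ↦ ?_⟩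
  rcases le_or_gt k m with hkm | hmk
  · have h_grow := mul_sub_le_sub_of_gap hgap hkm
    have h_near : lam / 2 ≤ z - x m := by simpa [abs_of_nonneg (sub_nonneg.2 hm)] using hz m
    have hkm' : (k : ℝ) ≤ m := by exact_mod_cast hkm
    rw [abs_of_nonpos (by linarith)]
    nlinarith [le_abs_self (z - x k), mul_nonneg hlam.le (sub_nonneg.2 hkm')]
  · have h_grow := mul_sub_le_sub_of_gap hgap (show m + 1 ≤ k by omega)
    have h_near := hz (m + 1)
    rw [abs_sub_comm, abs_of_pos (sub_pos.2 hm_succ)] at h_near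
    have hmk' : (m : ℝ) + 1 ≤ k := by exact_mod_cast hmk
    push_cast at h_grow
    rw [abs_of_nonneg (by linarith)]
    nlinarith [neg_abs_le (z - x k), mul_nonneg hlam.le (sub_nonneg.2 hmk')]

end SeparatedSequence

theorem summation_log_estimate_general (lam d : ℝ) (hlam : 0 < lam) :
    ∃ C : ℝ, 0 < C ∧ ∀ x : ℤ → ℝ,
      (∀ k, lam ≤ x (k + 1) - x k) → (∀ k, x (k + 1) - x k ≤ d) →
      ∀ z xt : ℝ, z ≠ xt →
      (∀ k, lam / 2 ≤ |z - x k|) → (∀ k, lam / 2 ≤ |xt - x k|) →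
      ∑' k : ℤ, |z - xt| / (|z - x k| * |xt - x k|) ≤
        C * (1 + max (Real.log |z - xt|) 0) := by
  have hC : 0 < 16 / lam * (3 + log⁺ (4 / lam)) := by
    have := posLog_nonneg (x := 4 / lam)
    positivity
  refine ⟨_, hC, fun x hgap _ z xt _ hz hxt ↦ ?_⟩
  obtain ⟨m, hm⟩ := exists_linear_growth_abs_sub hlam hgap hz
  obtain ⟨n, hn⟩ := exists_linear_growth_abs_sub hlam hgap hxt
  set R := |z - xt|
  have hR : 0 ≤ R := abs_nonneg _
  have hc : 0 < lam / 4 := by positivity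
  rw [max_comm, ← posLog_apply]
  refine tsum_le_of_sum_le' (mul_nonneg hC.le (by linarith [posLog_nonneg (x := R)])) fun s ↦ ?_
  calc ∑ k ∈ s, R / (|z - x k| * |xt - x k|)
      ≤ ∑ k ∈ s, (min |z - x k|⁻¹ (R / |z - x k| ^ 2) + min |xt - x k|⁻¹ (R / |xt - x k| ^ 2)) :=
        sum_le_sum fun k _ ↦ div_mul_le_min_add_min (by linarith [hz k]) (by linarith [hxt k]) hR
          ((abs_sub_le z (x k) xt).trans_eq (by rw [abs_sub_comm (x k)]))
    _ ≤ 2 * (2 / (lam / 4) * (3 + log⁺ (R / (lam / 4)))) := by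
        rw [sum_add_distrib, two_mul]
        exact add_le_add (sum_min_inv_div_sq_le_of_linear_growth hc hR hm s)
          (sum_min_inv_div_sq_le_of_linear_growth hc hR hn s)
    _ ≤ 16 / lam * ((3 + log⁺ (lam / 4)⁻¹) * (1 + log⁺ R)) := by
        rw [← mul_assoc, show 2 * (2 / (lam / 4)) = 16 / lam by field_simp; ring]
        gcongr
        exact three_add_posLog_div_le R (lam / 4)
    _ = 16 / lam * (3 + log⁺ (4 / lam)) * (1 + log⁺ R) := by rw [inv_div, mul_assoc]

/-- Key summation estimate: for a separated sequence `x : ℤ → ℝ` with gaps between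
`lam` and `d`, and real points `z ≠ x̃` both at distance at least `lam/2` from the
sequence, `∑ₖ |z - x̃| / (|z - xₖ| |x̃ - xₖ|) ≤ C (1 + log⁺ |z - x̃|)` where `C`
depends only on `lam` and `d`. -/
theorem summation_log_estimate (lam d : ℝ) (hlam : 0 < lam) (hd : lam ≤ d) :
    ∃ C : ℝ, 0 < C ∧ ∀ x : ℤ → ℝ,
      (∀ k, lam ≤ x (k + 1) - x k) → (∀ k, x (k + 1) - x k ≤ d) →
      ∀ z xt : ℝ, z ≠ xt →
      (∀ k, lam / 2 ≤ |z - x k|) → (∀ k, lam / 2 ≤ |xt - x k|) →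
      ∑' k : ℤ, |z - xt| / (|z - x k| * |xt - x k|) ≤
        C * (1 + max (Real.log |z - xt|) 0) :=
  summation_log_estimate_general lam d hlam
end
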